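/- arXiv:2404.00982 — 3 statements merged into one kernel-verified Lean document; each statement's English description precedes it below -/
import Mathlib

section
/- Let Q ∈ ℂ^{N×N} be an arbitrary complex matrix, and suppose the symmetric part (Q + Qᵀ)/2 admits a Takagi-type factorization (Q + Qᵀ)/2 = S Σ Sᵀ, where S ∈ ℂ^{N×N} is unitary and Σ ∈ ℂ^{N×N} is diagonal with nonnegative real diagonal entries. Then the matrix Ψ* = S Sᵀ is symmetric and unitary, and for every symmetric unitary matrix Ψ ∈ ℂ^{N×N} (i.e., Ψᵀ = Ψ and Ψ Ψᴴ = I) it holds that ‖Ψ − Q‖_F ≥ ‖S Sᵀ − Q‖_F; that is, S Sᵀ minimizes the Frobenius-norm distance to Q over all symmetric unitary matrices. -/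
open scoped Matrix

/-- Frobenius norm of a complex matrix. -/
noncomputable def frob {N : ℕ} (A : Matrix (Fin N) (Fin N) ℂ) : ℝ :=
  Real.sqrt (∑ i, ∑ j, ‖A i j‖ ^ 2)

/-!
For unitary `Ψ`, `‖Ψ - Q‖_F² = N + ‖Q‖_F² - 2 Re tr(Ψ Qᴴ)`, so the task is to maximize
`Re tr(Ψ Qᴴ)`. For symmetric `Ψ` only the symmetric part `S Σ Sᵀ` of `Q` contributes, and
`tr(Ψ (S Σ Sᵀ)ᴴ) = tr(U Σ)` with `U = Sᴴ Ψ S̄` unitary. The diagonal entries of a unitary matrix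
have modulus at most `1`, so `Re tr(U Σ) ≤ tr Σ`, with equality when `U = 1`, i.e. `Ψ = S Sᵀ`.
-/

namespace Matrix

open RCLike

variable {m n 𝕜 : Type*} [Fintype m] [Fintype n] [RCLike 𝕜]

theorem re_trace_mul_conjTranspose (A B : Matrix m n 𝕜) :
    re (trace (A * Bᴴ)) = ∑ i, ∑ j, re (A i j * star (B i j)) := by
  simp only [trace, diag_apply, mul_apply, conjTranspose_apply, map_sum]

theorem sum_norm_sub_sq (A B : Matrix m n 𝕜) :
    ∑ i, ∑ j, ‖(A - B) i j‖ ^ 2 =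
      ∑ i, ∑ j, ‖A i j‖ ^ 2 + ∑ i, ∑ j, ‖B i j‖ ^ 2 - 2 * re (trace (A * Bᴴ)) := by
  have hentry (a b : 𝕜) : ‖a - b‖ ^ 2 = ‖a‖ ^ 2 + ‖b‖ ^ 2 - 2 * re (a * star b) := by
    rw [@norm_sub_sq 𝕜 𝕜, ← inner_conj_symm, conj_re, RCLike.inner_apply, mul_comm,
      RCLike.star_def]
    ring
  simp only [sub_apply, hentry, re_trace_mul_conjTranspose, Finset.mul_sum,
    Finset.sum_sub_distrib, Finset.sum_add_distrib]

theorem sum_norm_sq_eq_re_trace (A : Matrix m n 𝕜) :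
    ∑ i, ∑ j, ‖A i j‖ ^ 2 = re (trace (A * Aᴴ)) := by
  simp only [re_trace_mul_conjTranspose, RCLike.star_def, RCLike.mul_conj, ← ofReal_pow, ofReal_re]

theorem trace_mul_conjTranspose_transpose_of_isSymm {Ψ : Matrix n n 𝕜} (hΨ : Ψ.IsSymm)
    (A : Matrix n n 𝕜) : trace (Ψ * Aᵀᴴ) = trace (Ψ * Aᴴ) := by
  rw [← trace_transpose, transpose_mul, hΨ.eq, conjTranspose_transpose_eq_transpose_conjTranspose,
    transpose_transpose, trace_mul_comm]

theorem trace_mul_conjTranspose_symmPart {Ψ : Matrix n n 𝕜} (hΨ : Ψ.IsSymm) (A : Matrix n n 𝕜) :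
    trace (Ψ * ((1 / 2 : 𝕜) • (A + Aᵀ))ᴴ) = trace (Ψ * Aᴴ) := by
  rw [conjTranspose_smul, conjTranspose_add, Matrix.mul_smul, Matrix.mul_add, trace_smul,
    trace_add, trace_mul_conjTranspose_transpose_of_isSymm hΨ]
  simp only [one_div, star_inv₀, star_ofNat, smul_eq_mul]
  ring

theorem trace_mul_conjTranspose_mul_transpose (Ψ S D : Matrix n n 𝕜) :
    trace (Ψ * (S * D * Sᵀ)ᴴ) = trace (Sᴴ * Ψ * Sᵀᴴ * Dᴴ) := by
  rw [conjTranspose_mul, conjTranspose_mul, ← Matrix.mul_assoc, ← Matrix.mul_assoc,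
    trace_mul_comm, ← Matrix.mul_assoc, ← Matrix.mul_assoc]

variable [DecidableEq n]

theorem sum_norm_sq_of_mem_unitaryGroup {U : Matrix n n 𝕜} (hU : U ∈ unitaryGroup n 𝕜) :
    ∑ i, ∑ j, ‖U i j‖ ^ 2 = Fintype.card n := by
  rw [sum_norm_sq_eq_re_trace, ← star_eq_conjTranspose, mem_unitaryGroup_iff.mp hU, trace_one]
  simp

theorem sum_norm_sub_sq_of_mem_unitaryGroup {U : Matrix n n 𝕜} (hU : U ∈ unitaryGroup n 𝕜)
    (A : Matrix n n 𝕜) :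
    ∑ i, ∑ j, ‖(U - A) i j‖ ^ 2 =
      Fintype.card n + ∑ i, ∑ j, ‖A i j‖ ^ 2 - 2 * re (trace (U * Aᴴ)) := by
  rw [sum_norm_sub_sq, sum_norm_sq_of_mem_unitaryGroup hU]

theorem re_trace_mul_diagonal_le {U : Matrix n n 𝕜} (hU : U ∈ unitaryGroup n 𝕜) {d : n → ℝ}
    (hd : ∀ i, 0 ≤ d i) : re (trace (U * diagonal fun i ↦ (d i : 𝕜))) ≤ ∑ i, d i := by
  simp only [trace, diag_apply, mul_diagonal, map_sum, re_mul_ofReal]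
  gcongr with i
  calc re (U i i) * d i ≤ ‖U i i‖ * d i := by gcongr; exacts [hd i, re_le_norm _]
    _ ≤ d i := mul_le_of_le_one_left (hd i) (entry_norm_bound_of_unitary hU i i)


theorem re_trace_mul_conjTranspose_takagi_le {S Ψ : Matrix n n 𝕜} (hS : S ∈ unitaryGroup n 𝕜)
    (hΨ : Ψ ∈ unitaryGroup n 𝕜) {d : n → ℝ} (hd : ∀ i, 0 ≤ d i) :
    re (trace (Ψ * (S * (diagonal fun i ↦ (d i : 𝕜)) * Sᵀ)ᴴ)) ≤ ∑ i, d i := by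
  rw [trace_mul_conjTranspose_mul_transpose, diagonal_conjTranspose]
  simp only [Pi.star_def, RCLike.star_def, conj_ofReal]
  have hST : Sᵀ ∈ unitaryGroup n 𝕜 := transpose_mem_unitaryGroup_iff.mpr hS
  exact re_trace_mul_diagonal_le
    (mul_mem (mul_mem (Unitary.star_mem hS) hΨ) (Unitary.star_mem hST)) hd

theorem trace_mul_conjTranspose_takagi_self {S : Matrix n n 𝕜} (hS : S ∈ unitaryGroup n 𝕜)
    (D : Matrix n n 𝕜) : trace (S * Sᵀ * (S * D * Sᵀ)ᴴ) = trace Dᴴ := by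
  have hST : Sᵀ ∈ unitaryGroup n 𝕜 := transpose_mem_unitaryGroup_iff.mpr hS
  have h : Sᴴ * (S * Sᵀ) * Sᵀᴴ = 1 := by
    rw [← Matrix.mul_assoc, ← star_eq_conjTranspose, mem_unitaryGroup_iff'.mp hS, Matrix.one_mul,
      ← star_eq_conjTranspose, mem_unitaryGroup_iff.mp hST]
  rw [trace_mul_conjTranspose_mul_transpose, h, Matrix.one_mul]

end Matrix

open Matrix RCLike

/-- **Theorem 1**: if `(Q + Qᵀ)/2 = S * Σ * Sᵀ` with `S` unitary and `Σ` diagonal with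
nonnegative real entries, then `S * Sᵀ` is the symmetric unitary matrix closest to `Q`
in Frobenius norm. -/
theorem nearest_symmetric_unitary {N : ℕ} (Q S Sig : Matrix (Fin N) (Fin N) ℂ)
    (hS : S * Sᴴ = 1)
    (hSigdiag : Sig.IsDiag)
    (hSigpos : ∀ i, ∃ r : ℝ, 0 ≤ r ∧ Sig i i = (r : ℂ))
    (hTakagi : (1 / 2 : ℂ) • (Q + Qᵀ) = S * Sig * Sᵀ) :
    (S * Sᵀ)ᵀ = S * Sᵀ ∧ (S * Sᵀ) * (S * Sᵀ)ᴴ = 1 ∧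
      ∀ Ψ : Matrix (Fin N) (Fin N) ℂ, Ψᵀ = Ψ → Ψ * Ψᴴ = 1 →
        frob (S * Sᵀ - Q) ≤ frob (Ψ - Q) := by
  have hSU : S ∈ unitaryGroup (Fin N) ℂ := mem_unitaryGroup_iff.mpr hS
  have hSSU : S * Sᵀ ∈ unitaryGroup (Fin N) ℂ :=
    mul_mem hSU (transpose_mem_unitaryGroup_iff.mpr hSU)
  choose σ hσ_nonneg hσ using hSigpos
  have hSig : Sig = diagonal fun i ↦ (σ i : ℂ) := by
    rw [← hSigdiag.diagonal_diag]
    exact congrArg diagonal (funext hσ)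
  refine ⟨isSymm_mul_transpose_self S, mem_unitaryGroup_iff.mp hSSU, fun Ψ hΨsymm hΨ ↦ ?_⟩
  have hΨU : Ψ ∈ unitaryGroup (Fin N) ℂ := mem_unitaryGroup_iff.mpr hΨ
  have htrace_le : re (trace (Ψ * Qᴴ)) ≤ re (trace (S * Sᵀ * Qᴴ)) := by
    rw [← trace_mul_conjTranspose_symmPart hΨsymm, ← trace_mul_conjTranspose_symmPart
      (isSymm_mul_transpose_self S), hTakagi, hSig, trace_mul_conjTranspose_takagi_self hSU,
      diagonal_conjTranspose, trace_diagonal]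
    simpa using re_trace_mul_conjTranspose_takagi_le hSU hΨU hσ_nonneg
  apply Real.sqrt_le_sqrt
  rw [sum_norm_sub_sq_of_mem_unitaryGroup hSSU, sum_norm_sub_sq_of_mem_unitaryGroup hΨU]
  linarith
end

section
/- Let S ∈ ℂ^{N×N} be unitary and Σ ∈ ℂ^{N×N} be diagonal with nonnegative real diagonal entries. Then for every unitary matrix U ∈ ℂ^{N×N}, ‖U Uᵀ − S Σ Sᵀ‖_F ≥ ‖S Sᵀ − S Σ Sᵀ‖_F; that is, over all unitary U, the Frobenius distance from U Uᵀ to S Σ Sᵀ is minimized at U = S. -/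
/-!
Expanding the square, `‖X - T‖_F² = ‖X‖_F² - 2 Re tr(Xᴴ T) + ‖T‖_F²`. For `X = U Uᵀ` unitary,
`‖X‖_F² = N` does not depend on `U`, so only the cross term matters. With the unitary
`W = Uᴴ S` it equals `Re tr(W Σ Wᵀ) = Σᵢⱼ σⱼ Re (Wᵢⱼ²) ≤ Σⱼ σⱼ Σᵢ |Wᵢⱼ|² = Σⱼ σⱼ`,
and this bound is attained at `U = S`, where `W = 1`.
-/

open scoped Matrix

open Matrix RCLike

namespace Matrix

variable {𝕜 m n k : Type*} [RCLike 𝕜] [Fintype m]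

theorem conjTranspose_mul_self_apply_self (A : Matrix m n 𝕜) (j : n) :
    (Aᴴ * A) j j = ∑ i, (‖A i j‖ ^ 2 : 𝕜) := by
  simp only [mul_apply, conjTranspose_apply, RCLike.star_def, RCLike.conj_mul]

theorem re_trace_conjTranspose_mul_self [Fintype n] (A : Matrix m n 𝕜) :
    re (Aᴴ * A).trace = ∑ i, ∑ j, ‖A i j‖ ^ 2 := by
  simp only [trace, diag, conjTranspose_mul_self_apply_self, map_sum]
  rw [Finset.sum_comm]
  simp_rw [← ofReal_pow, ofReal_re]

theorem re_trace_sub_conjTranspose_mul_sub [Fintype n] (X T : Matrix m n 𝕜) :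
    re ((X - T)ᴴ * (X - T)).trace
      = re (Xᴴ * X).trace - 2 * re (Xᴴ * T).trace + re (Tᴴ * T).trace := by
  have h : (Tᴴ * X).trace = star (Xᴴ * T).trace := by
    rw [← trace_conjTranspose, conjTranspose_mul, conjTranspose_conjTranspose]
  simp only [conjTranspose_sub, Matrix.sub_mul, Matrix.mul_sub, trace_sub, h, map_sub,
    RCLike.star_def, conj_re]
  ring

theorem re_trace_conjTranspose_mul_self_of_mem_unitaryGroup [Fintype n] [DecidableEq n]
    {X : Matrix n n 𝕜} (hX : X ∈ unitaryGroup n 𝕜) :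
    re (Xᴴ * X).trace = Fintype.card n := by
  rw [← star_eq_conjTranspose, mem_unitaryGroup_iff'.mp hX, trace_one]
  simp

theorem trace_conjTranspose_mul_transpose_mul_mul_transpose [Fintype n] [Fintype k]
    (U : Matrix m n 𝕜) (S : Matrix m k 𝕜) (D : Matrix k k 𝕜) :
    ((U * Uᵀ)ᴴ * (S * D * Sᵀ)).trace = ((Uᴴ * S) * D * (Uᴴ * S)ᵀ).trace := by
  rw [conjTranspose_mul, transpose_conjTranspose, transpose_mul, conjTranspose_transpose,
    Matrix.mul_assoc, trace_mul_comm]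
  simp only [Matrix.mul_assoc]

theorem re_trace_mul_diagonal_mul_transpose_le [Fintype n] [DecidableEq n] (W : Matrix m n 𝕜)
    {σ : n → ℝ} (hσ : ∀ j, 0 ≤ σ j) :
    re (W * diagonal (fun j => (σ j : 𝕜)) * Wᵀ).trace ≤ ∑ j, σ j * ∑ i, ‖W i j‖ ^ 2 := by
  calc re (W * diagonal (fun j => (σ j : 𝕜)) * Wᵀ).trace
      = ∑ i, ∑ j, σ j * re (W i j * W i j) := by
        simp only [trace, diag, mul_apply (M := W * diagonal fun j => (σ j : 𝕜)), mul_diagonal,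
          transpose_apply, map_sum]
        refine Finset.sum_congr rfl fun i _ => Finset.sum_congr rfl fun j _ => ?_
        rw [mul_right_comm, mul_comm, re_ofReal_mul]
    _ ≤ ∑ i, ∑ j, σ j * ‖W i j‖ ^ 2 := by
        gcongr with i _ j _
        · exact hσ j
        · simpa [sq] using re_le_norm (W i j * W i j)
    _ = ∑ j, σ j * ∑ i, ‖W i j‖ ^ 2 := by
        rw [Finset.sum_comm]
        simp only [Finset.mul_sum]

theorem sum_norm_sq_eq_one_of_conjTranspose_mul_self_eq_one [DecidableEq n] {W : Matrix m n 𝕜}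
    (hW : Wᴴ * W = 1) (j : n) : ∑ i, ‖W i j‖ ^ 2 = 1 := by
  have hjj := congrArg re (congrFun (congrFun hW j) j)
  simpa only [conjTranspose_mul_self_apply_self, one_apply_eq, map_sum, one_re, ← ofReal_pow,
    ofReal_re] using hjj

theorem re_trace_mul_diagonal_mul_transpose_le_sum [Fintype n] [DecidableEq n]
    {W : Matrix m n 𝕜} (hW : Wᴴ * W = 1) {σ : n → ℝ} (hσ : ∀ j, 0 ≤ σ j) :
    re (W * diagonal (fun j => (σ j : 𝕜)) * Wᵀ).trace ≤ ∑ j, σ j := by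
  simpa only [sum_norm_sq_eq_one_of_conjTranspose_mul_self_eq_one hW, mul_one]
    using re_trace_mul_diagonal_mul_transpose_le W hσ

end Matrix

/-- For unitary `S` and nonnegative diagonal `Σ`, the Frobenius distance from `U Uᵀ`
to `S Σ Sᵀ`, over unitary `U`, is minimized at `U = S`. -/
theorem takagi_projection_step {N : ℕ}
    (S : Matrix (Fin N) (Fin N) ℂ) (σ : Fin N → ℝ)
    (hS : S * Sᴴ = 1) (hσ : ∀ i, 0 ≤ σ i) :
    ∀ U : Matrix (Fin N) (Fin N) ℂ, U * Uᴴ = 1 →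
      frob (S * Sᵀ - S * Matrix.diagonal (fun i => (σ i : ℂ)) * Sᵀ)
        ≤ frob (U * Uᵀ - S * Matrix.diagonal (fun i => (σ i : ℂ)) * Sᵀ) := by
  intro U hU
  set T := S * diagonal (fun i => (σ i : ℂ)) * Sᵀ
  have hS_mem : S ∈ unitaryGroup (Fin N) ℂ := mem_unitaryGroup_iff.mpr hS
  have hU_mem : U ∈ unitaryGroup (Fin N) ℂ := mem_unitaryGroup_iff.mpr hU
  have cross_S : re ((S * Sᵀ)ᴴ * T).trace = ∑ i, σ i := by
    rw [trace_conjTranspose_mul_transpose_mul_mul_transpose, ← star_eq_conjTranspose,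
      mem_unitaryGroup_iff'.mp hS_mem, Matrix.one_mul, transpose_one, Matrix.mul_one,
      trace_diagonal, map_sum]
    simp only [re_to_complex, Complex.ofReal_re]
  have cross_U : re ((U * Uᵀ)ᴴ * T).trace ≤ ∑ i, σ i := by
    rw [trace_conjTranspose_mul_transpose_mul_mul_transpose]
    exact re_trace_mul_diagonal_mul_transpose_le_sum
      (mem_unitaryGroup_iff'.mp (mul_mem (Unitary.star_mem hU_mem) hS_mem)) hσ
  have self_S := re_trace_conjTranspose_mul_self_of_mem_unitaryGroup
    (mul_mem hS_mem (transpose_mem_unitaryGroup_iff.mpr hS_mem))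
  have self_U := re_trace_conjTranspose_mul_self_of_mem_unitaryGroup
    (mul_mem hU_mem (transpose_mem_unitaryGroup_iff.mpr hU_mem))
  unfold frob
  rw [← re_trace_conjTranspose_mul_self, ← re_trace_conjTranspose_mul_self,
    re_trace_sub_conjTranspose_mul_sub, re_trace_sub_conjTranspose_mul_sub]
  apply Real.sqrt_le_sqrt
  linarith
end

section
/- Let A ∈ ℂ^{M×M} be Hermitian with an orthonormal eigenbasis u_1, …, u_M and corresponding real eigenvalues λ_1, …, λ_M, let b ∈ ℂ^M, let N > 0, and suppose γ ∈ ℝ satisfies γ > max_d λ_d and Σ_{d=1}^{M} |u_dᴴ b|² / (γ − λ_d)² = N. Define ψ* = Σ_{d=1}^{M} (u_dᴴ b / (γ − λ_d)) u_d. Then ‖ψ*‖² = N, and for every ψ ∈ ℂ^M with ‖ψ‖² = N, ψᴴ A ψ + 2 Re(ψᴴ b) ≤ ψ*ᴴ A ψ* + 2 Re(ψ*ᴴ b); that is, ψ* maximizes ψᴴ A ψ + 2Re(ψᴴ b) over the sphere ‖ψ‖² = N. -/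
/-!
The matrix `U` whose columns are the eigenvectors `u_d` is unitary and diagonalizes `A`, so in the
coordinates `c = Uᴴ ψ` both the constraint and the objective split over `d`, and
`b` becomes `(γ - λ_d) w_d` where `ψ* = U w`. Completing the square coordinatewise,
`λ |c|² + 2 Re(c̄ (γ - λ) w) = γ |c|² - (γ - λ) |c - w|² + (γ - λ) |w|²`,
so on the sphere `‖c‖² = ‖w‖²` the objective is largest at `c = w`, because `γ ≥ λ_d`.
-/

open Matrix ComplexConjugate

section

open RCLike

variable {𝕜 n : Type*} [RCLike 𝕜] [Fintype n]

def quadObjective (A : Matrix n n 𝕜) (b ψ : n → 𝕜) : ℝ :=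
  re (star ψ ⬝ᵥ A *ᵥ ψ) + 2 * re (star ψ ⬝ᵥ b)

theorem dotProduct_mulVec_eq_sum_sum {R : Type*} [NonUnitalSemiring R] (v : n → R)
    (A : Matrix n n R) (w : n → R) : v ⬝ᵥ A *ᵥ w = ∑ i, ∑ j, v i * A i j * w j := by
  simp only [dotProduct, mulVec, Finset.mul_sum, mul_assoc]

theorem star_dotProduct_self_eq_sum_norm_sq (x : n → 𝕜) :
    star x ⬝ᵥ x = ((∑ i, ‖x i‖ ^ 2 : ℝ) : 𝕜) := by
  simp [dotProduct, RCLike.conj_mul]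

theorem sum_norm_sq_mulVec [DecidableEq n] {U : Matrix n n 𝕜} (hU : Uᴴ * U = 1) (c : n → 𝕜) :
    ∑ i, ‖(U *ᵥ c) i‖ ^ 2 = ∑ i, ‖c i‖ ^ 2 := by
  rw [← ofReal_inj (K := 𝕜), ← star_dotProduct_self_eq_sum_norm_sq,
    ← star_dotProduct_self_eq_sum_norm_sq, star_mulVec, ← dotProduct_mulVec, mulVec_mulVec,
    hU, one_mulVec]

theorem quadObjective_mulVec (U A : Matrix n n 𝕜) (b c : n → 𝕜) :
    quadObjective A b (U *ᵥ c) = quadObjective (Uᴴ * A * U) (Uᴴ *ᵥ b) c := by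
  simp only [quadObjective, star_mulVec, ← dotProduct_mulVec, mulVec_mulVec, Matrix.mul_assoc]

theorem quadObjective_diagonal [DecidableEq n] (lam : n → ℝ) (β c : n → 𝕜) :
    quadObjective (diagonal fun i => (lam i : 𝕜)) β c
      = ∑ i, (lam i * ‖c i‖ ^ 2 + 2 * re (conj (c i) * β i)) := by
  simp only [quadObjective, dotProduct, mulVec_diagonal, Pi.star_apply, map_sum,
    Finset.mul_sum, ← Finset.sum_add_distrib]
  refine Finset.sum_congr rfl fun i _ => ?_
  rw [← mul_assoc, mul_comm (star (c i)), mul_assoc, star_def, RCLike.conj_mul, ← ofReal_pow,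
    ← ofReal_mul, ofReal_re]

theorem mul_norm_sq_add_two_re_conj_mul_eq (lam γ : ℝ) (z w : 𝕜) :
    lam * ‖z‖ ^ 2 + 2 * re (conj z * ((γ - lam : ℝ) * w))
      = γ * ‖z‖ ^ 2 - (γ - lam) * ‖z - w‖ ^ 2 + (γ - lam) * ‖w‖ ^ 2 := by
  rw [norm_sub_sq (𝕜 := 𝕜), inner_apply, mul_left_comm, re_ofReal_mul, mul_comm w]
  ring

theorem quadObjective_diagonal_le [DecidableEq n] {lam : n → ℝ} {γ : ℝ} (hγ : ∀ i, lam i ≤ γ)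
    {c w : n → 𝕜} (hcw : ∑ i, ‖c i‖ ^ 2 = ∑ i, ‖w i‖ ^ 2) :
    quadObjective (diagonal fun i => (lam i : 𝕜)) (fun i => ((γ - lam i : ℝ) : 𝕜) * w i) c
      ≤ quadObjective (diagonal fun i => (lam i : 𝕜)) (fun i => ((γ - lam i : ℝ) : 𝕜) * w i) w := by
  have hdev : 0 ≤ ∑ i, (γ - lam i) * ‖c i - w i‖ ^ 2 :=
    Finset.sum_nonneg fun i _ => mul_nonneg (sub_nonneg.2 (hγ i)) (sq_nonneg _)
  simp only [quadObjective_diagonal, mul_norm_sq_add_two_re_conj_mul_eq, sub_self, norm_zero,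
    ne_eq, OfNat.ofNat_ne_zero, not_false_eq_true, zero_pow, mul_zero,
    sub_zero, Finset.sum_add_distrib, Finset.sum_sub_distrib, ← Finset.mul_sum, hcw]
  linarith

end

theorem quadratic_sphere_max_closed_form_general {M : ℕ} (A : Matrix (Fin M) (Fin M) ℂ)
    (u : Fin M → Fin M → ℂ) (lam : Fin M → ℝ)
    (horth : ∀ d e, ∑ m, (starRingEnd ℂ) (u d m) * u e m = if d = e then 1 else 0)
    (heig : ∀ d, A.mulVec (u d) = (lam d : ℂ) • u d)
    (b : Fin M → ℂ) (N : ℝ)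
    (γ : ℝ) (hγ : ∀ d, lam d < γ)
    (hroot : ∑ d, ‖∑ m, (starRingEnd ℂ) (u d m) * b m‖ ^ 2 / (γ - lam d) ^ 2 = N) :
    let ψstar : Fin M → ℂ :=
      fun m => ∑ d, ((∑ k, (starRingEnd ℂ) (u d k) * b k) / ((γ : ℂ) - (lam d : ℂ))) * u d m
    (∑ m, ‖ψstar m‖ ^ 2 = N) ∧
    ∀ ψ : Fin M → ℂ, ∑ m, ‖ψ m‖ ^ 2 = N →
      (∑ i, ∑ j, (starRingEnd ℂ) (ψ i) * A i j * ψ j).re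
          + 2 * (∑ m, (starRingEnd ℂ) (ψ m) * b m).re
        ≤ (∑ i, ∑ j, (starRingEnd ℂ) (ψstar i) * A i j * ψstar j).re
          + 2 * (∑ m, (starRingEnd ℂ) (ψstar m) * b m).re := by
  intro ψstar
  let U : Matrix (Fin M) (Fin M) ℂ := Matrix.of fun m d => u d m
  have hUU : Uᴴ * U = 1 := by
    ext d e
    simpa [U, Matrix.mul_apply, Matrix.one_apply] using horth d e
  have hdiag : Uᴴ * A * U = diagonal fun d => (lam d : ℂ) := by
    have hAU : A * U = U * diagonal fun d => (lam d : ℂ) := by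
      ext m d
      rw [Matrix.mul_diagonal]
      simpa [U, Matrix.mul_apply, mulVec, dotProduct, mul_comm (u d m)] using congrFun (heig d) m
    rw [Matrix.mul_assoc, hAU, ← Matrix.mul_assoc, hUU, Matrix.one_mul]
  let w : Fin M → ℂ := fun d => (∑ k, conj (u d k) * b k) / ((γ : ℂ) - (lam d : ℂ))
  have hψstar : ψstar = U *ᵥ w := by
    ext m
    simp [ψstar, U, w, mulVec, dotProduct, mul_comm]
  have hb : Uᴴ *ᵥ b = fun d => ((γ - lam d : ℝ) : ℂ) * w d := by
    ext d
    have hγd : (γ : ℂ) - lam d ≠ 0 := by exact_mod_cast (sub_pos.2 (hγ d)).ne'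
    simp [U, w, mulVec, dotProduct, mul_div_cancel₀ _ hγd]
  have hw : ∑ d, ‖w d‖ ^ 2 = N := by
    rw [← hroot]
    refine Finset.sum_congr rfl fun d _ => ?_
    rw [norm_div, div_pow, ← Complex.ofReal_sub, Complex.norm_real, Real.norm_eq_abs, sq_abs]
  refine ⟨by rw [hψstar, sum_norm_sq_mulVec hUU, hw], fun ψ hψ => ?_⟩
  obtain ⟨c, rfl⟩ : ∃ c, ψ = U *ᵥ c :=
    ⟨Uᴴ *ᵥ ψ, by rw [mulVec_mulVec, mul_eq_one_comm.1 hUU, one_mulVec]⟩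
  rw [sum_norm_sq_mulVec hUU] at hψ
  simp only [← dotProduct_mulVec_eq_sum_sum]
  change quadObjective A b (U *ᵥ c) ≤ quadObjective A b ψstar
  rw [hψstar, quadObjective_mulVec, quadObjective_mulVec, hdiag, hb]
  exact quadObjective_diagonal_le (fun d => (hγ d).le) (hψ.trans hw.symm)

/-- Closed-form solution of the norm-constrained quadratic maximization problem (29):
with `A` Hermitian having orthonormal eigenbasis `u_d` and eigenvalues `λ_d`, and
`γ > max_d λ_d` solving `∑_d |u_dᴴ b|²/(γ − λ_d)² = N`, the vector
`ψ* = ∑_d (u_dᴴ b/(γ − λ_d)) u_d` lies on the sphere `‖ψ‖² = N` and maximizes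
`ψᴴ A ψ + 2 Re(ψᴴ b)` over it. -/
theorem quadratic_sphere_max_closed_form {M : ℕ} (A : Matrix (Fin M) (Fin M) ℂ)
    (hA : Aᴴ = A) (u : Fin M → Fin M → ℂ) (lam : Fin M → ℝ)
    (horth : ∀ d e, ∑ m, (starRingEnd ℂ) (u d m) * u e m = if d = e then 1 else 0)
    (heig : ∀ d, A.mulVec (u d) = (lam d : ℂ) • u d)
    (b : Fin M → ℂ) (N : ℝ) (hN : 0 < N)
    (γ : ℝ) (hγ : ∀ d, lam d < γ)
    (hroot : ∑ d, ‖∑ m, (starRingEnd ℂ) (u d m) * b m‖ ^ 2 / (γ - lam d) ^ 2 = N) :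
    let ψstar : Fin M → ℂ :=
      fun m => ∑ d, ((∑ k, (starRingEnd ℂ) (u d k) * b k) / ((γ : ℂ) - (lam d : ℂ))) * u d m
    (∑ m, ‖ψstar m‖ ^ 2 = N) ∧
    ∀ ψ : Fin M → ℂ, ∑ m, ‖ψ m‖ ^ 2 = N →
      (∑ i, ∑ j, (starRingEnd ℂ) (ψ i) * A i j * ψ j).re
          + 2 * (∑ m, (starRingEnd ℂ) (ψ m) * b m).re
        ≤ (∑ i, ∑ j, (starRingEnd ℂ) (ψstar i) * A i j * ψstar j).re
          + 2 * (∑ m, (starRingEnd ℂ) (ψstar m) * b m).re :=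
  quadratic_sphere_max_closed_form_general A u lam horth heig b N γ hγ hroot
end
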